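/- Let B be a bounded selfadjoint operator on a complex Hilbert space H, S a closed subspace of H, and S = S+ ⊕_B S− any decomposition. Then the following are equivalent: (i) B is S-complementable; (ii) B is S+-complementable and S−-complementable; (iii) B is S-weakly complementable, the Schur complement B_{/S+} is S−-complementable, and the Schur complement B_{/S−} is S+-complementable. In this case there exists Q ∈ P(B,S) which decomposes as Q = Q+ + Q− with Q+ ∈ P(B,S+), Q− ∈ P(B,S−), range(Q+) orthogonal to range(Q−), and Q+Q− = Q−Q+ = 0. -/

import Mathlib

open ContinuousLinearMap

noncomputable section

variable {H : Type*} [NormedAddCommGroup H] [InnerProductSpace ℂ H] [CompleteSpace H]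

/-- The orthogonal projection onto a closed subspace `S`, as an endomorphism of `H`. -/
def projL (S : Submodule ℂ H) [S.HasOrthogonalProjection] : H →L[ℂ] H :=
  S.subtypeL.comp S.orthogonalProjectionOnto

/-- The corner `a = P_S B P_S` of the block decomposition of `B` w.r.t. `H = S ⊕ Sᗮ`. -/
def blockA (B : H →L[ℂ] H) (S : Submodule ℂ H) [S.HasOrthogonalProjection] : H →L[ℂ] H :=
  projL S * B * projL S

/-- The corner `b = P_S B P_{Sᗮ}` of the block decomposition of `B` w.r.t. `H = S ⊕ Sᗮ`. -/
def blockB (B : H →L[ℂ] H) (S : Submodule ℂ H) [S.HasOrthogonalProjection] : H →L[ℂ] H :=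
  projL S * B * (1 - projL S)

/-- The corner `c = P_{Sᗮ} B P_{Sᗮ}` of the block decomposition of `B` w.r.t. `H = S ⊕ Sᗮ`. -/
def blockC (B : H →L[ℂ] H) (S : Submodule ℂ H) [S.HasOrthogonalProjection] : H →L[ℂ] H :=
  (1 - projL S) * B * (1 - projL S)

/-- `m = |a|^{1/2}`: `m` is the (unique) positive fourth root of `a⋆ a`. -/
def IsSqrtAbs (a m : H →L[ℂ] H) : Prop :=
  m.IsPositive ∧ m ^ 4 = adjoint a * a

/-- `B` is `S`-weakly complementable: `range b ⊆ range |a|^{1/2}`. -/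
def IsWeaklyComplementable (B : H →L[ℂ] H) (S : Submodule ℂ H)
    [S.HasOrthogonalProjection] : Prop :=
  ∃ m : H →L[ℂ] H, IsSqrtAbs (blockA B S) m ∧
    LinearMap.range (blockB B S : H →ₗ[ℂ] H) ≤ LinearMap.range (m : H →ₗ[ℂ] H)

/-- `B` is `S`-complementable: `H = S + B⁻¹(Sᗮ)`. -/
def IsComplementable (B : H →L[ℂ] H) (S : Submodule ℂ H) : Prop :=
  S ⊔ Sᗮ.comap (B : H →ₗ[ℂ] H) = ⊤

/-- The set `P(B,S)` of `B`-selfadjoint bounded idempotents onto `S`. -/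
def projSet (B : H →L[ℂ] H) (S : Submodule ℂ H) : Set (H →L[ℂ] H) :=
  {Q | Q * Q = Q ∧ LinearMap.range (Q : H →ₗ[ℂ] H) = S ∧ B * Q = adjoint Q * B}

/-- `Y` is the Schur complement `B_{/S} = [[0,0],[0, c - f⋆ u f]]`, where `f` is the reduced
solution of `b = |a|^{1/2} x` and `a = u |a|` is the polar decomposition of `a`. -/
def IsSchur (B : H →L[ℂ] H) (S : Submodule ℂ H) [S.HasOrthogonalProjection]
    (Y : H →L[ℂ] H) : Prop :=
  ∃ m u f : H →L[ℂ] H,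
    IsSqrtAbs (blockA B S) m ∧
    LinearMap.ker (u : H →ₗ[ℂ] H) = LinearMap.ker (blockA B S : H →ₗ[ℂ] H) ∧
    (∀ x ∈ (LinearMap.ker (blockA B S : H →ₗ[ℂ] H))ᗮ, ‖u x‖ = ‖x‖) ∧
    blockA B S = u * m ^ 2 ∧
    m * f = blockB B S ∧
    LinearMap.range (f : H →ₗ[ℂ] H) ≤ (LinearMap.range (m : H →ₗ[ℂ] H)).topologicalClosure ∧
    Y = blockC B S - adjoint f * (u * f)

/-- The set `M⁻(B,T)`. -/
def Mminus (B : H →L[ℂ] H) (T : Submodule ℂ H) : Set (H →L[ℂ] H) :=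
  {X | IsSelfAdjoint X ∧ (B - X).IsPositive ∧ LinearMap.range (X : H →ₗ[ℂ] H) ≤ T}

/-- The set `M⁺(B,T)`. -/
def Mplus (B : H →L[ℂ] H) (T : Submodule ℂ H) : Set (H →L[ℂ] H) :=
  {X | IsSelfAdjoint X ∧ (X - B).IsPositive ∧ LinearMap.range (X : H →ₗ[ℂ] H) ≤ T}

/-- `Y` is the Loewner maximum of `M`. -/
def IsMaxOf (M : Set (H →L[ℂ] H)) (Y : H →L[ℂ] H) : Prop :=
  Y ∈ M ∧ ∀ X ∈ M, (Y - X).IsPositive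

/-- `Z` is the Loewner minimum of `M`. -/
def IsMinOf (M : Set (H →L[ℂ] H)) (Z : H →L[ℂ] H) : Prop :=
  Z ∈ M ∧ ∀ X ∈ M, (X - Z).IsPositive

/-- `Z` is the greatest lower bound of `M` in the Loewner order on selfadjoint operators. -/
def IsGLBOf (M : Set (H →L[ℂ] H)) (Z : H →L[ℂ] H) : Prop :=
  IsSelfAdjoint Z ∧ (∀ X ∈ M, (X - Z).IsPositive) ∧
    ∀ F : H →L[ℂ] H, IsSelfAdjoint F → (∀ X ∈ M, (X - F).IsPositive) → (Z - F).IsPositive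

/-- `Y` is the least upper bound of `M` in the Loewner order on selfadjoint operators. -/
def IsLUBOf (M : Set (H →L[ℂ] H)) (Y : H →L[ℂ] H) : Prop :=
  IsSelfAdjoint Y ∧ (∀ X ∈ M, (Y - X).IsPositive) ∧
    ∀ F : H →L[ℂ] H, IsSelfAdjoint F → (∀ X ∈ M, (F - X).IsPositive) → (F - Y).IsPositive

/-- A decomposition `S = S₊ ⊕_B S₋` into a `B`-nonnegative and a `B`-nonpositive part. -/
def IsWDecomp (B : H →L[ℂ] H) (S Sp Sm : Submodule ℂ H) : Prop :=
  (∀ x ∈ Sp, ∀ y ∈ Sm, (inner ℂ x y : ℂ) = 0) ∧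
  Sp ⊔ Sm = S ∧
  (∀ x ∈ Sp, 0 ≤ (inner ℂ (B x) x : ℂ).re) ∧
  (∀ x ∈ Sm, (inner ℂ (B x) x : ℂ).re ≤ 0) ∧
  (∀ x ∈ Sp, ∀ y ∈ Sm, (inner ℂ (B x) y : ℂ) = 0)

/-- `Y` is Krein's shorted operator `B_{/T}` of the positive operator `B` to `T`:
the Loewner maximum of `{X : 0 ≤ X ≤ B, range X ⊆ Tᗮ}`. -/
def IsShort (B : H →L[ℂ] H) (T : Submodule ℂ H) (Y : H →L[ℂ] H) : Prop :=
  (Y.IsPositive ∧ (B - Y).IsPositive ∧ LinearMap.range (Y : H →ₗ[ℂ] H) ≤ Tᗮ) ∧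
    ∀ X : H →L[ℂ] H, X.IsPositive → (B - X).IsPositive → LinearMap.range (X : H →ₗ[ℂ] H) ≤ Tᗮ →
      (Y - X).IsPositive

/-- The set `{R⋆ Q⋆ B Q R : Q² = Q, N(Q) = T}`. -/
def comprSet2 (B R : H →L[ℂ] H) (T : Submodule ℂ H) : Set (H →L[ℂ] H) :=
  {X | ∃ Q : H →L[ℂ] H, Q * Q = Q ∧ LinearMap.ker (Q : H →ₗ[ℂ] H) = T ∧
    X = adjoint R * (adjoint Q * B * Q) * R}

/-- The set `{Q⋆ B Q : Q² = Q, N(Q) = S}`. -/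
def comprSet1 (B : H →L[ℂ] H) (S : Submodule ℂ H) : Set (H →L[ℂ] H) :=
  {X | ∃ Q : H →L[ℂ] H, Q * Q = Q ∧ LinearMap.ker (Q : H →ₗ[ℂ] H) = S ∧ X = adjoint Q * B * Q}

/-- The set `N⁻(W,T)` of the Krein space `(H, [x,y] = ⟨Jx,y⟩)`. -/
def Nminus (J W : H →L[ℂ] H) (T : Submodule ℂ H) : Set (H →L[ℂ] H) :=
  {X | IsSelfAdjoint (J * X) ∧ (J * (W - X)).IsPositive ∧ LinearMap.range (X : H →ₗ[ℂ] H) ≤ T}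

/-- The set `N⁺(W,T)` of the Krein space `(H, [x,y] = ⟨Jx,y⟩)`. -/
def Nplus (J W : H →L[ℂ] H) (T : Submodule ℂ H) : Set (H →L[ℂ] H) :=
  {X | IsSelfAdjoint (J * X) ∧ (J * (X - W)).IsPositive ∧ LinearMap.range (X : H →ₗ[ℂ] H) ≤ T}

/-- `Y` is the maximum of `M` in the Krein order induced by `J`. -/
def KMaxOf (J : H →L[ℂ] H) (M : Set (H →L[ℂ] H)) (Y : H →L[ℂ] H) : Prop :=
  Y ∈ M ∧ ∀ X ∈ M, (J * (Y - X)).IsPositive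

/-- `Z` is the minimum of `M` in the Krein order induced by `J`. -/
def KMinOf (J : H →L[ℂ] H) (M : Set (H →L[ℂ] H)) (Z : H →L[ℂ] H) : Prop :=
  Z ∈ M ∧ ∀ X ∈ M, (J * (X - Z)).IsPositive

/-- `E` is a densely defined projection (idempotent) with kernel `N`. -/
def IsDDProj (N : Submodule ℂ H) (E : H →ₗ.[ℂ] H) : Prop :=
  Dense (E.domain : Set H) ∧
  (∃ h : ∀ x : E.domain, E x ∈ E.domain, ∀ x : E.domain, E ⟨E x, h x⟩ = E x) ∧
  (LinearMap.ker E.toFun).map E.domain.subtype = N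

/-- `G` is the (everywhere defined, bounded) composition `E ∘ T`; in particular
`range T ⊆ dom E`. -/
def IsBddComp (E : H →ₗ.[ℂ] H) (T G : H →L[ℂ] H) : Prop :=
  ∃ h : ∀ x : H, T x ∈ E.domain, ∀ x : H, G x = E ⟨T x, h x⟩

/-!
Every condition reduces to range inclusions between the corners `a_T = P_T B P_T` and
`b_T = P_T B (1 - P_T)`: `B` is `T`-complementable iff `R(b_T) ⊆ R(a_T)`. Because `S₊` and `S₋`
are orthogonal and `B`-orthogonal, `P_{S±}` commutes with `a_S`, `P_{S±} a_S = a_{S±}` and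
`P_{S±} b_S = b_{S±}`; this splits the inclusion for `S` into those for `S₊` and `S₋`, and
`P_{S±} |a_S|^{1/2}` is `|a_{S±}|^{1/2}`. A Schur complement of `B` to `S₊` has the same
`S₋`-corners as `B`, so it is `S₋`-complementable iff `B` is; weak complementability is what makes
such Schur complements exist, with polar factor `±P_{N(a)ᗮ}` as `a_{S₊} ≥ 0 ≥ a_{S₋}`.
Finally, with `s` the reduced solution of `a_T s = b_T` (Douglas' lemma), `P_T + s` is a
`B`-selfadjoint projection onto `T` annihilating `Tᗮ ∩ B⁻¹(Tᗮ) ⊇ S∓`, and the two add up.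
-/

set_option linter.unusedSectionVars false

section Douglas

open Filter Topology

variable {𝕜 E F G : Type*} [RCLike 𝕜] [NormedAddCommGroup E] [InnerProductSpace 𝕜 E]
  [NormedAddCommGroup F] [NormedSpace 𝕜 F] [NormedAddCommGroup G] [NormedSpace 𝕜 G]

lemma ker_le_ker_of_comp_eq {a : E →L[𝕜] F} {s : G →L[𝕜] E} {b : G →L[𝕜] F} (hs : a ∘L s = b)
    (hr : LinearMap.range (s : G →ₗ[𝕜] E) ≤ (LinearMap.ker (a : E →ₗ[𝕜] F))ᗮ) :
    LinearMap.ker (b : G →ₗ[𝕜] F) ≤ LinearMap.ker (s : G →ₗ[𝕜] E) := fun x hx =>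
  Submodule.disjoint_def.1 (Submodule.orthogonal_disjoint _) (s x)
    (by simpa [← hs] using hx) (hr ⟨x, rfl⟩)

lemma orthogonal_orthogonal_ker [CompleteSpace E] (a : E →L[𝕜] F) :
    (LinearMap.ker (a : E →ₗ[𝕜] F))ᗮᗮ = LinearMap.ker (a : E →ₗ[𝕜] F) := by
  rw [Submodule.orthogonal_orthogonal_eq_closure]
  exact a.isClosed_ker.submodule_topologicalClosure_eq

/-- Douglas' lemma, in the form producing the reduced solution of `a s = b`. -/
theorem exists_comp_eq_of_range_le [CompleteSpace E] [CompleteSpace G] (a : E →L[𝕜] F)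
    (b : G →L[𝕜] F) (h : LinearMap.range (b : G →ₗ[𝕜] F) ≤ LinearMap.range (a : E →ₗ[𝕜] F)) :
    ∃ s : G →L[𝕜] E, a ∘L s = b ∧
      LinearMap.range (s : G →ₗ[𝕜] E) ≤ (LinearMap.ker (a : E →ₗ[𝕜] F))ᗮ := by
  set N := LinearMap.ker (a : E →ₗ[𝕜] F)
  have hN : Nᗮᗮ = N := orthogonal_orthogonal_ker a
  let aK := (a : E →ₗ[𝕜] F) ∘ₗ Nᗮ.subtype
  have hinj : Function.Injective aK := (injective_iff_map_eq_zero aK).2 fun x hx =>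
    Subtype.ext (Submodule.disjoint_def.1 (Submodule.orthogonal_disjoint N) x hx x.2)
  have hrange : LinearMap.range (a : E →ₗ[𝕜] F) ≤ LinearMap.range aK := by
    rintro _ ⟨x, rfl⟩
    obtain ⟨u, hu, v, hv, rfl⟩ := Submodule.mem_sup.1
      (Submodule.sup_orthogonal_of_hasOrthogonalProjection (K := Nᗮ) ▸ Submodule.mem_top (x := x))
    rw [hN] at hv
    exact ⟨⟨u, hu⟩, by simp [aK, show a v = 0 from hv]⟩
  let g : G →ₗ[𝕜] E := Nᗮ.subtype ∘ₗ (LinearEquiv.ofInjective aK hinj).symm.toLinearMap ∘ₗ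
    (b : G →ₗ[𝕜] F).codRestrict _ fun y => hrange (h ⟨y, rfl⟩)
  have hag : ∀ y, a (g y) = b y := fun y =>
    LinearEquiv.ofInjective_symm_apply (h := hinj) (f := aK) _
  have hgN : ∀ y, g y ∈ Nᗮ := fun y => Subtype.prop _
  have hg : Continuous g := g.continuous_of_seq_closed_graph fun u x y hu hgu => by
    have hy : y ∈ Nᗮ := (Submodule.isClosed_orthogonal N).mem_of_tendsto hgu
      (Eventually.of_forall fun n => hgN (u n))
    have hay : a y = b x := tendsto_nhds_unique ((a.continuous.tendsto y).comp hgu)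
      (by simpa [Function.comp_def, hag] using (b.continuous.tendsto x).comp hu)
    have hker : y - g x ∈ N := by simp [N, hay, hag]
    exact sub_eq_zero.1 (Submodule.disjoint_def.1 (Submodule.orthogonal_disjoint N) _ hker
      (Nᗮ.sub_mem hy (hgN x)))
  exact ⟨⟨g, hg⟩, ContinuousLinearMap.ext hag, by rintro _ ⟨y, rfl⟩; exact hgN y⟩

end Douglas

lemma orthogonal_ker_eq_closure_range {m : H →L[ℂ] H} (hm : IsSelfAdjoint m) :
    (LinearMap.ker (m : H →ₗ[ℂ] H))ᗮ = (LinearMap.range (m : H →ₗ[ℂ] H)).topologicalClosure := by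
  simpa [hm.adjoint_eq] using m.orthogonal_ker

lemma range_le_orthogonal_ker {m : H →L[ℂ] H} (hm : IsSelfAdjoint m) :
    LinearMap.range (m : H →ₗ[ℂ] H) ≤ (LinearMap.ker (m : H →ₗ[ℂ] H))ᗮ :=
  (orthogonal_ker_eq_closure_range hm).symm ▸ Submodule.le_topologicalClosure _

lemma range_mul_le_range_mul {X Y : H →L[ℂ] H} (P : H →L[ℂ] H)
    (h : LinearMap.range (X : H →ₗ[ℂ] H) ≤ LinearMap.range (Y : H →ₗ[ℂ] H)) :
    LinearMap.range ((P * X : H →L[ℂ] H) : H →ₗ[ℂ] H) ≤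
      LinearMap.range ((P * Y : H →L[ℂ] H) : H →ₗ[ℂ] H) := by
  simp only [toLinearMap_mul, Module.End.mul_eq_comp, LinearMap.range_comp]
  exact Submodule.map_mono h

lemma range_le_of_mul_eq {X Y Z : H →L[ℂ] H} (h : X * Y = Z) :
    LinearMap.range (Z : H →ₗ[ℂ] H) ≤ LinearMap.range (X : H →ₗ[ℂ] H) := by
  rw [← h, toLinearMap_mul, Module.End.mul_eq_comp]
  exact LinearMap.range_comp_le_range _ _

lemma range_eq_of_mul_eq {P Q : H →L[ℂ] H} (hPQ : P * Q = Q) (hQP : Q * P = P) :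
    LinearMap.range (Q : H →ₗ[ℂ] H) = LinearMap.range (P : H →ₗ[ℂ] H) :=
  le_antisymm (range_le_of_mul_eq hPQ) (range_le_of_mul_eq hQP)

section Projection

variable {S T : Submodule ℂ H} [S.HasOrthogonalProjection] [T.HasOrthogonalProjection]

lemma projL_eq_starProjection (S : Submodule ℂ H) [S.HasOrthogonalProjection] :
    projL S = S.starProjection := rfl

lemma isSelfAdjoint_projL (S : Submodule ℂ H) [S.HasOrthogonalProjection] :
    IsSelfAdjoint (projL S) :=
  isSelfAdjoint_starProjection S

lemma isIdempotentElem_projL (S : Submodule ℂ H) [S.HasOrthogonalProjection] :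
    IsIdempotentElem (projL S) :=
  S.isIdempotentElem_starProjection

lemma projL_apply_mem (S : Submodule ℂ H) [S.HasOrthogonalProjection] (x : H) :
    projL S x ∈ S :=
  S.starProjection_apply_mem x

lemma projL_apply_of_mem {x : H} (hx : x ∈ S) : projL S x = x :=
  Submodule.starProjection_eq_self_iff.2 hx

lemma projL_apply_eq_zero_iff {x : H} : projL S x = 0 ↔ x ∈ Sᗮ :=
  Submodule.starProjection_apply_eq_zero_iff S

lemma projL_projL_apply (S : Submodule ℂ H) [S.HasOrthogonalProjection] (x : H) :
    projL S (projL S x) = projL S x :=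
  projL_apply_of_mem (projL_apply_mem S x)

lemma range_projL (S : Submodule ℂ H) [S.HasOrthogonalProjection] :
    LinearMap.range (projL S : H →ₗ[ℂ] H) = S :=
  S.range_starProjection

lemma projL_mul_of_range_le {X : H →L[ℂ] H} (h : LinearMap.range (X : H →ₗ[ℂ] H) ≤ S) :
    projL S * X = X :=
  ContinuousLinearMap.ext fun x => projL_apply_of_mem (h ⟨x, rfl⟩)

lemma projL_mul_eq_zero_of_range_le {X : H →L[ℂ] H}
    (h : LinearMap.range (X : H →ₗ[ℂ] H) ≤ Sᗮ) : projL S * X = 0 :=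
  ContinuousLinearMap.ext fun x => projL_apply_eq_zero_iff.2 (h ⟨x, rfl⟩)

lemma projL_mul_projL_of_le (h : T ≤ S) : projL T * projL S = projL T :=
  Submodule.starProjection_comp_starProjection_of_le h

lemma projL_mul_projL_eq_zero (h : T ≤ Sᗮ) : projL S * projL T = 0 :=
  projL_mul_eq_zero_of_range_le (by rwa [range_projL])

lemma projL_mul_mul_projL_eq_zero {B : H →L[ℂ] H} (h : T ≤ Sᗮ.comap (B : H →ₗ[ℂ] H)) :
    projL S * B * projL T = 0 := by
  rw [mul_assoc]
  exact projL_mul_eq_zero_of_range_le (by rintro _ ⟨x, rfl⟩; exact h (projL_apply_mem T x))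

lemma projL_eq_add {T' : Submodule ℂ H} [T'.HasOrthogonalProjection] (hT' : T' ≤ Tᗮ)
    (hS : T ⊔ T' = S) : projL S = projL T + projL T' := by
  have hT : T ≤ T'ᗮ := (Submodule.isOrtho_iff_le.2 hT').symm.le
  ext x
  refine Submodule.eq_starProjection_of_mem_orthogonal
    (hS ▸ Submodule.add_mem_sup (projL_apply_mem T x) (projL_apply_mem T' x)) ?_
  rw [← hS, ← Submodule.inf_orthogonal]
  refine ⟨?_, ?_⟩
  · rw [add_apply, ← sub_sub]
    exact Tᗮ.sub_mem (T.sub_starProjection_mem_orthogonal x) (hT' (projL_apply_mem T' x))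
  · rw [add_apply, add_comm, ← sub_sub]
    exact T'ᗮ.sub_mem (T'.sub_starProjection_mem_orthogonal x) (hT (projL_apply_mem T x))

end Projection

section Blocks

variable {B : H →L[ℂ] H} {S : Submodule ℂ H} [S.HasOrthogonalProjection]

lemma blockA_apply (x : H) : blockA B S x = projL S (B (projL S x)) := rfl

lemma blockB_apply (x : H) : blockB B S x = projL S (B (x - projL S x)) := rfl

lemma isSelfAdjoint_blockA (hB : IsSelfAdjoint B) : IsSelfAdjoint (blockA B S) := by
  have := hB.conjugate (projL S)
  rwa [(isSelfAdjoint_projL S).star_eq] at this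

lemma re_inner_blockA_apply (x : H) :
    (inner ℂ (blockA B S x) x : ℂ).re = (inner ℂ (B (projL S x)) (projL S x) : ℂ).re := by
  rw [blockA_apply, projL_eq_starProjection, Submodule.inner_starProjection_left_eq_right]

lemma blockA_nonneg (hB : IsSelfAdjoint B) (h : ∀ x ∈ S, 0 ≤ (inner ℂ (B x) x : ℂ).re) :
    0 ≤ blockA B S := by
  rw [nonneg_iff_isPositive, isPositive_def']
  refine ⟨isSelfAdjoint_blockA hB, fun x => ?_⟩
  rw [reApplyInnerSelf, RCLike.re_to_complex, re_inner_blockA_apply]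
  exact h _ (projL_apply_mem S x)

lemma blockA_nonpos (hB : IsSelfAdjoint B) (h : ∀ x ∈ S, (inner ℂ (B x) x : ℂ).re ≤ 0) :
    blockA B S ≤ 0 := by
  rw [← neg_nonneg, nonneg_iff_isPositive, isPositive_def']
  refine ⟨(isSelfAdjoint_blockA hB).neg, fun x => ?_⟩
  have := h _ (projL_apply_mem S x)
  rw [reApplyInnerSelf, neg_apply, inner_neg_left, map_neg, RCLike.re_to_complex,
    re_inner_blockA_apply]
  exact neg_nonneg.2 this

theorem isComplementable_iff_range_le (B : H →L[ℂ] H) (S : Submodule ℂ H)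
    [S.HasOrthogonalProjection] :
    IsComplementable B S ↔
      LinearMap.range (blockB B S : H →ₗ[ℂ] H) ≤ LinearMap.range (blockA B S : H →ₗ[ℂ] H) := by
  constructor
  · rintro h _ ⟨y, rfl⟩
    obtain ⟨s, hs, n, hn, hsn⟩ :=
      Submodule.mem_sup.1 (h ▸ Submodule.mem_top (x := y - projL S y))
    have hBn : projL S (B n) = 0 := projL_apply_eq_zero_iff.2 hn
    refine ⟨s, ?_⟩
    rw [coe_coe, coe_coe, blockA_apply, blockB_apply, ← hsn, map_add, map_add, hBn, add_zero,
      projL_apply_of_mem hs]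
  · intro hr
    rw [IsComplementable, eq_top_iff]
    rintro x -
    obtain ⟨w, hw⟩ := hr ⟨x, rfl⟩
    refine Submodule.mem_sup.2 ⟨projL S x + projL S w,
      S.add_mem (projL_apply_mem S x) (projL_apply_mem S w),
      x - (projL S x + projL S w), ?_, add_sub_cancel _ _⟩
    rw [Submodule.mem_comap, ← projL_apply_eq_zero_iff]
    change projL S (B (x - (projL S x + projL S w))) = 0
    rw [coe_coe, coe_coe, blockA_apply, blockB_apply] at hw
    rw [← sub_sub, map_sub, map_sub, ← hw, sub_self]

end Blocks

section SquareRoot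

variable {a m : H →L[ℂ] H}

lemma exists_isSqrtAbs_range_le (ha : IsSelfAdjoint a) :
    ∃ m, IsSqrtAbs a m ∧
      LinearMap.range (a : H →ₗ[ℂ] H) ≤ LinearMap.range (m : H →ₗ[ℂ] H) := by
  refine ⟨cfc (fun t : ℝ => √|t|) a, ⟨?_, ?_⟩, ?_⟩
  · rw [← nonneg_iff_isPositive]
    exact cfc_nonneg fun t _ => Real.sqrt_nonneg _
  · rw [← star_eq_adjoint, ha.star_eq, ← cfc_pow ..]
    conv_rhs => rw [← cfc_id' ℝ a, ← cfc_mul ..]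
    refine cfc_congr fun t _ => ?_
    rw [show (4 : ℕ) = 2 * 2 from rfl, pow_mul, Real.sq_sqrt (abs_nonneg t), sq_abs, sq]
  · have key : cfc (fun t : ℝ => √|t|) a * cfc (fun t : ℝ => √t - √(-t)) a = a := by
      rw [← cfc_mul ..]
      conv_rhs => rw [← cfc_id' ℝ a]
      refine cfc_congr fun t _ => ?_
      rcases le_total 0 t with ht | ht
      · rw [abs_of_nonneg ht, Real.sqrt_eq_zero'.2 (neg_nonpos.2 ht), sub_zero,
          Real.mul_self_sqrt ht]
      · rw [abs_of_nonpos ht, Real.sqrt_eq_zero'.2 ht, zero_sub, mul_neg,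
          Real.mul_self_sqrt (neg_nonneg.2 ht), neg_neg]
    exact range_le_of_mul_eq key

lemma IsComplementable.isWeaklyComplementable {B : H →L[ℂ] H} {S : Submodule ℂ H}
    [S.HasOrthogonalProjection] (hB : IsSelfAdjoint B) (h : IsComplementable B S) :
    IsWeaklyComplementable B S :=
  let ⟨m, hm, hr⟩ := exists_isSqrtAbs_range_le (isSelfAdjoint_blockA (S := S) hB)
  ⟨m, hm, ((isComplementable_iff_range_le B S).1 h).trans hr⟩

lemma IsSqrtAbs.mul_self_eq (h : IsSqrtAbs a m) : m * m = CFC.sqrt (adjoint a * a) :=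
  (CFC.sqrt_unique (by rw [← h.2]; noncomm_ring) h.1.isSelfAdjoint.mul_self_nonneg).symm

lemma IsSqrtAbs.eq_sqrt (h : IsSqrtAbs a m) : m = CFC.sqrt (CFC.sqrt (adjoint a * a)) :=
  (CFC.sqrt_unique h.mul_self_eq ((nonneg_iff_isPositive m).2 h.1)).symm

lemma IsSqrtAbs.sq_eq_of_nonneg (h : IsSqrtAbs a m) (ha : 0 ≤ a) : m ^ 2 = a := by
  rw [sq, h.mul_self_eq, ← star_eq_adjoint, (IsSelfAdjoint.of_nonneg ha).star_eq,
    CFC.sqrt_mul_self a ha]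

lemma IsSqrtAbs.sq_eq_of_nonpos (h : IsSqrtAbs a m) (ha : a ≤ 0) : m ^ 2 = -a := by
  have ha' : 0 ≤ -a := neg_nonneg.2 ha
  have hsa : IsSelfAdjoint a := by simpa using (IsSelfAdjoint.of_nonneg ha').neg
  rw [sq, h.mul_self_eq, ← star_eq_adjoint, hsa.star_eq, ← neg_mul_neg, CFC.sqrt_mul_self _ ha']

lemma IsSqrtAbs.projL_mul {S : Submodule ℂ H} [S.HasOrthogonalProjection] (h : IsSqrtAbs a m)
    (hc : Commute (projL S) a) : IsSqrtAbs (projL S * a) (projL S * m) := by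
  set P := projL S
  have hP : star P = P := (isSelfAdjoint_projL S).star_eq
  have hPP : IsIdempotentElem P := isIdempotentElem_projL S
  have hc' : Commute P (star a) := hP ▸ hc.star_star
  have hcm : Commute P m := by
    rw [h.eq_sqrt, ← star_eq_adjoint]
    exact (((hc'.mul_right hc).symm.cfcₙ_nnreal _).cfcₙ_nnreal _).symm
  refine ⟨?_, ?_⟩
  · have hPm : P * m = P * m * P := by rw [mul_assoc, ← hcm.eq, ← mul_assoc, hPP.eq]
    rw [hPm]
    exact h.1.conj_starProjection S
  · rw [← star_eq_adjoint, star_mul, hP, hcm.mul_pow, hPP.pow_succ_eq 3, h.2, ← star_eq_adjoint]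
    calc P * (star a * a) = star a * (P * P) * a := by rw [hPP.eq, ← hc'.eq, mul_assoc]
      _ = star a * P * (P * a) := by noncomm_ring

end SquareRoot

section Schur

variable {B : H →L[ℂ] H} {T T' : Submodule ℂ H} [T.HasOrthogonalProjection]
  [T'.HasOrthogonalProjection]

lemma exists_isSchur_of_polar {m u : H →L[ℂ] H} (hm : IsSqrtAbs (blockA B T) m)
    (hbm : LinearMap.range (blockB B T : H →ₗ[ℂ] H) ≤ LinearMap.range (m : H →ₗ[ℂ] H))
    (hu_ker : LinearMap.ker (u : H →ₗ[ℂ] H) = LinearMap.ker (blockA B T : H →ₗ[ℂ] H))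
    (hu_iso : ∀ x ∈ (LinearMap.ker (blockA B T : H →ₗ[ℂ] H))ᗮ, ‖u x‖ = ‖x‖)
    (hau : blockA B T = u * m ^ 2) : ∃ Y, IsSchur B T Y := by
  obtain ⟨f, hf, hfr⟩ := exists_comp_eq_of_range_le m (blockB B T) hbm
  exact ⟨_, m, u, f, hm, hu_ker, hu_iso, hau, hf,
    orthogonal_ker_eq_closure_range hm.1.isSelfAdjoint ▸ hfr, rfl⟩

lemma ker_projL_orthogonal_ker (a : H →L[ℂ] H) :
    LinearMap.ker (projL (LinearMap.ker (a : H →ₗ[ℂ] H))ᗮ : H →ₗ[ℂ] H) =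
      LinearMap.ker (a : H →ₗ[ℂ] H) := by
  rw [projL_eq_starProjection, Submodule.ker_starProjection, orthogonal_orthogonal_ker]

lemma projL_orthogonal_ker_mul_self {a : H →L[ℂ] H} (ha : IsSelfAdjoint a) :
    projL (LinearMap.ker (a : H →ₗ[ℂ] H))ᗮ * a = a :=
  projL_mul_of_range_le (range_le_orthogonal_ker ha)

/-- For `a ≥ 0` the polar decomposition `a = u |a|` has `u` the projection onto `N(a)ᗮ`. -/
lemma IsWeaklyComplementable.exists_isSchur_of_nonneg (hw : IsWeaklyComplementable B T)
    (ha : 0 ≤ blockA B T) : ∃ Y, IsSchur B T Y := by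
  obtain ⟨m, hm, hbm⟩ := hw
  refine exists_isSchur_of_polar hm hbm (ker_projL_orthogonal_ker (blockA B T))
    (fun x hx => ?_) ?_
  · rw [projL_apply_of_mem hx]
  · rw [hm.sq_eq_of_nonneg ha, projL_orthogonal_ker_mul_self (IsSelfAdjoint.of_nonneg ha)]

/-- For `a ≤ 0` the polar decomposition `a = u |a|` has `u` minus the projection onto `N(a)ᗮ`. -/
lemma IsWeaklyComplementable.exists_isSchur_of_nonpos (hw : IsWeaklyComplementable B T)
    (ha : blockA B T ≤ 0) : ∃ Y, IsSchur B T Y := by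
  obtain ⟨m, hm, hbm⟩ := hw
  have hsa : IsSelfAdjoint (blockA B T) := by
    simpa using (IsSelfAdjoint.of_nonneg (neg_nonneg.2 ha)).neg
  refine exists_isSchur_of_polar hm hbm (u := -projL (LinearMap.ker (blockA B T : H →ₗ[ℂ] H))ᗮ)
    ?_ (fun x hx => ?_) ?_
  · rw [toLinearMap_neg, LinearMap.ker_neg, ker_projL_orthogonal_ker]
  · rw [neg_apply, norm_neg, projL_apply_of_mem hx]
  · rw [hm.sq_eq_of_nonpos ha, neg_mul_neg, projL_orthogonal_ker_mul_self hsa]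

/-- The `T'`-corners of a Schur complement to `T` are those of `B` when `T'` is orthogonal and
`B`-orthogonal to `T`. -/
theorem IsSchur.isComplementable_iff {Y : H →L[ℂ] H}
    (hTT' : T' ≤ Tᗮ ⊓ Tᗮ.comap (B : H →ₗ[ℂ] H)) (hT'T : T ≤ T'ᗮ ⊓ T'ᗮ.comap (B : H →ₗ[ℂ] H))
    (hY : IsSchur B T Y) : IsComplementable Y T' ↔ IsComplementable B T' := by
  obtain ⟨m, u, f, hm, -, -, -, hmf, hfr, rfl⟩ := hY
  obtain ⟨hT', hBT'⟩ := le_inf_iff.1 hTT'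
  obtain ⟨hT, hBT⟩ := le_inf_iff.1 hT'T
  set P := projL T
  set P' := projL T'
  have hPP' : P * P' = 0 := projL_mul_projL_eq_zero hT'
  have hP'P : P' * P = 0 := projL_mul_projL_eq_zero hT
  have hBPP' : P * B * P' = 0 := projL_mul_mul_projL_eq_zero hBT'
  have hBP'P : P' * B * P = 0 := projL_mul_mul_projL_eq_zero hBT
  have hbP' : blockB B T * P' = 0 := calc
    blockB B T * P' = P * B * P' - P * B * (P * P') := by simp only [blockB]; noncomm_ring
    _ = 0 := by rw [hBPP', hPP', mul_zero, sub_zero]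
  have hfP' : f * P' = 0 := ContinuousLinearMap.ext fun x =>
    ker_le_ker_of_comp_eq hmf ((orthogonal_ker_eq_closure_range hm.1.isSelfAdjoint).symm ▸ hfr)
      (LinearMap.mem_ker.2 (by simpa using congr($hbP' x)))
  have hP'f : P' * adjoint f = 0 := by
    have h := congr(star $hfP')
    rwa [star_mul, star_zero, (isSelfAdjoint_projL T').star_eq, star_eq_adjoint] at h
  have hP'Y : P' * (blockC B T - adjoint f * (u * f)) = P' * B * (1 - P) := calc
    _ = P' * B * (1 - P) - P' * P * B * (1 - P) - P' * adjoint f * (u * f) := by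
      simp only [blockC]; noncomm_ring
    _ = P' * B * (1 - P) := by rw [hP'P, hP'f]; noncomm_ring
  have hA : blockA (blockC B T - adjoint f * (u * f)) T' = blockA B T' := calc
    _ = P' * B * (1 - P) * P' := by rw [blockA, hP'Y]
    _ = P' * B * P' - P' * B * (P * P') := by noncomm_ring
    _ = blockA B T' := by rw [hPP', mul_zero, sub_zero, blockA]
  have hB : blockB (blockC B T - adjoint f * (u * f)) T' = blockB B T' := calc
    _ = P' * B * (1 - P) * (1 - P') := by rw [blockB, hP'Y]
    _ = blockB B T' - P' * B * P * (1 - P') := by simp only [blockB]; noncomm_ring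
    _ = blockB B T' := by rw [hBP'P, zero_mul, sub_zero]
  rw [isComplementable_iff_range_le, isComplementable_iff_range_le, hA, hB]

end Schur

section BSelfadjointProjection

variable {R : Type*} [Ring R] {P s : R}

lemma IsIdempotentElem.add_of_mul_eq (hP : IsIdempotentElem P) (hPs : P * s = s)
    (hsP : s * P = 0) : IsIdempotentElem (P + s) := by
  have hss : s * s = 0 := by nth_rewrite 2 [← hPs]; rw [← mul_assoc, hsP, zero_mul]
  calc (P + s) * (P + s) = P * P + P * s + s * P + s * s := by noncomm_ring
    _ = P + s := by rw [hP.eq, hPs, hsP, hss, add_zero, add_zero]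

/-- In block form `P + s = [[1, s], [0, 0]]`, so `B (P + s)` is selfadjoint iff `a s = b` and
`b⋆ s = s⋆ b`; the latter follows from the former, as `s⋆ b = s⋆ a s`. -/
lemma mul_add_eq_star_add_mul [StarRing R] {B : R} (hP : IsSelfAdjoint P) (hB : IsSelfAdjoint B)
    (hPs : P * s = s) (hs : P * B * P * s = P * B * (1 - P)) :
    B * (P + s) = star (P + s) * B := by
  have hsP : star s * P = star s := by simpa [hP.star_eq] using congr(star $hPs)
  have hb : P * B * s = P * B * (1 - P) := by rw [← hs, mul_assoc _ P s, hPs]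
  have hb' : star s * B * P = (1 - P) * B * P := by
    simpa [hP.star_eq, hB.star_eq, mul_assoc, sub_mul] using congr(star $hb)
  have hss : star s * B * (1 - P) = star s * B * s := calc
    star s * B * (1 - P) = star s * P * B * (1 - P) := by rw [hsP]
    _ = star s * (P * B * s) := by rw [hb]; noncomm_ring
    _ = star s * B * s := by rw [← mul_assoc, ← mul_assoc, hsP]
  have hsB : star s * B = (1 - P) * B * (P + s) := calc
    star s * B = star s * B * P + star s * B * (1 - P) := by noncomm_ring
    _ = star s * B * P + star s * B * (P * s) := by rw [hss, hPs]
    _ = (1 - P) * B * P * (1 + s) := by rw [← hb']; noncomm_ring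
    _ = (1 - P) * B * (P + s) := by rw [mul_assoc _ P, mul_add, mul_one, hPs]
  have hPB : P * B * (P + s) = P * B := by rw [mul_add, hb]; noncomm_ring
  calc B * (P + s) = P * B * (P + s) + (1 - P) * B * (P + s) := by noncomm_ring
    _ = star (P + s) * B := by rw [hPB, ← hsB, star_add, hP.star_eq, add_mul]

end BSelfadjointProjection

section ProjSet

variable {B : H →L[ℂ] H} {T T' : Submodule ℂ H}

/-- The projection is `P_T + s`, with `s` the reduced solution of `a s = b`. -/
theorem IsComplementable.exists_mem_projSet [T.HasOrthogonalProjection] (hB : IsSelfAdjoint B)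
    (h : IsComplementable B T) :
    ∃ Q ∈ projSet B T,
      Tᗮ ⊓ Tᗮ.comap (B : H →ₗ[ℂ] H) ≤ LinearMap.ker (Q : H →ₗ[ℂ] H) := by
  set P := projL T
  obtain ⟨s, hs, hsr⟩ := exists_comp_eq_of_range_le _ _ ((isComplementable_iff_range_le B T).1 h)
  have hker := ker_le_ker_of_comp_eq hs hsr
  have hTa : Tᗮ ≤ LinearMap.ker (blockA B T : H →ₗ[ℂ] H) := fun x hx => by
    rw [LinearMap.mem_ker, coe_coe, blockA_apply,
      projL_apply_eq_zero_iff.2 hx, map_zero, map_zero]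
  have hPs : P * s = s := projL_mul_of_range_le <|
    hsr.trans ((Submodule.orthogonal_le hTa).trans_eq T.orthogonal_orthogonal)
  have hsP : s * P = 0 := ContinuousLinearMap.ext fun x => hker <| by
    rw [LinearMap.mem_ker, coe_coe, coe_coe, blockB_apply, projL_projL_apply, sub_self, map_zero,
      map_zero]
  refine ⟨P + s, ⟨(isIdempotentElem_projL T).add_of_mul_eq hPs hsP, ?_, ?_⟩, ?_⟩
  · rw [range_eq_of_mul_eq (P := P) (by rw [mul_add, isIdempotentElem_projL, hPs])
      (by rw [add_mul, isIdempotentElem_projL, hsP, add_zero]), range_projL]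
  · rw [← star_eq_adjoint]
    exact mul_add_eq_star_add_mul (isSelfAdjoint_projL T) hB hPs hs
  · rintro x ⟨hx, hBx⟩
    have hPx : P x = 0 := projL_apply_eq_zero_iff.2 hx
    have hsx : s x = 0 := hker <| by
      rw [LinearMap.mem_ker, coe_coe, blockB_apply, hPx, sub_zero]
      exact projL_apply_eq_zero_iff.2 hBx
    simp [hPx, hsx]

lemma add_mem_projSet {Q Q' : H →L[ℂ] H} (hQ : Q ∈ projSet B T) (hQ' : Q' ∈ projSet B T')
    (hQQ' : Q * Q' = 0) (hQ'Q : Q' * Q = 0) : Q + Q' ∈ projSet B (T ⊔ T') := by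
  obtain ⟨hQ2, rfl, hBQ⟩ := hQ
  obtain ⟨hQ'2, rfl, hBQ'⟩ := hQ'
  refine ⟨IsIdempotentElem.add (a := Q) hQ2 hQ'2 (by rw [hQQ', hQ'Q, add_zero]),
    le_antisymm ?_ ?_, ?_⟩
  · rw [toLinearMap_add]
    exact LinearMap.range_add_le _ _
  · exact sup_le (range_le_of_mul_eq (by rw [add_mul, hQ2, hQ'Q, add_zero]))
      (range_le_of_mul_eq (by rw [add_mul, hQ'2, hQQ', zero_add]))
  · rw [mul_add, hBQ, hBQ', map_add, add_mul]

end ProjSet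

section OrthogonalSum

variable {B : H →L[ℂ] H} {S T T' : Submodule ℂ H} [S.HasOrthogonalProjection]
  [T.HasOrthogonalProjection] [T'.HasOrthogonalProjection]

lemma projL_mul_blockB : projL S * blockB B S = blockB B S := by
  rw [blockB, ← mul_assoc, ← mul_assoc, (isIdempotentElem_projL S).eq]

lemma projL_mul_blockA_of_sup (hTT' : T' ≤ Tᗮ ⊓ Tᗮ.comap (B : H →ₗ[ℂ] H)) (hS : T ⊔ T' = S) :
    projL T * blockA B S = blockA B T := by
  have hTS : projL T * projL S = projL T := projL_mul_projL_of_le (hS ▸ le_sup_left)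
  calc projL T * blockA B S = projL T * projL S * B * projL S := by rw [blockA]; noncomm_ring
    _ = blockA B T + projL T * B * projL T' := by
      rw [hTS, projL_eq_add (le_inf_iff.1 hTT').1 hS, blockA]; noncomm_ring
    _ = blockA B T := by rw [projL_mul_mul_projL_eq_zero (le_inf_iff.1 hTT').2, add_zero]

lemma blockA_mul_projL_of_sup (hT'T : T ≤ T'ᗮ ⊓ T'ᗮ.comap (B : H →ₗ[ℂ] H))
    (hS : T ⊔ T' = S) : blockA B S * projL T = blockA B T := by
  have hST : projL S * projL T = projL T :=
    projL_mul_of_range_le ((range_projL T).trans_le (hS ▸ le_sup_left))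
  have hT' : T' ≤ Tᗮ := (Submodule.isOrtho_iff_le.2 (le_inf_iff.1 hT'T).1).symm.le
  calc blockA B S * projL T = projL S * B * (projL S * projL T) := by rw [blockA]; noncomm_ring
    _ = blockA B T + projL T' * B * projL T := by
      rw [hST, projL_eq_add hT' hS, blockA]; noncomm_ring
    _ = blockA B T := by rw [projL_mul_mul_projL_eq_zero (le_inf_iff.1 hT'T).2, add_zero]

lemma projL_mul_blockB_of_sup (hTT' : T' ≤ Tᗮ ⊓ Tᗮ.comap (B : H →ₗ[ℂ] H)) (hS : T ⊔ T' = S) :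
    projL T * blockB B S = blockB B T := by
  have hTS : projL T * projL S = projL T := projL_mul_projL_of_le (hS ▸ le_sup_left)
  calc projL T * blockB B S = projL T * projL S * B * (1 - projL S) := by
        rw [blockB]; noncomm_ring
    _ = blockB B T - projL T * B * projL T' := by
      rw [hTS, projL_eq_add (le_inf_iff.1 hTT').1 hS, blockB]; noncomm_ring
    _ = blockB B T := by rw [projL_mul_mul_projL_eq_zero (le_inf_iff.1 hTT').2, sub_zero]

theorem isComplementable_iff_of_sup (hTT' : T' ≤ Tᗮ ⊓ Tᗮ.comap (B : H →ₗ[ℂ] H))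
    (hT'T : T ≤ T'ᗮ ⊓ T'ᗮ.comap (B : H →ₗ[ℂ] H)) (hS : T ⊔ T' = S) :
    IsComplementable B S ↔ IsComplementable B T ∧ IsComplementable B T' := by
  have hS' : T' ⊔ T = S := sup_comm T T' ▸ hS
  simp only [isComplementable_iff_range_le]
  constructor
  · intro h
    exact ⟨projL_mul_blockB_of_sup hTT' hS ▸ projL_mul_blockA_of_sup hTT' hS ▸
        range_mul_le_range_mul _ h,
      projL_mul_blockB_of_sup hT'T hS' ▸ projL_mul_blockA_of_sup hT'T hS' ▸
        range_mul_le_range_mul _ h⟩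
  · rintro ⟨hT, hT'⟩
    have hb : blockB B S = blockB B T + blockB B T' := by
      rw [← projL_mul_blockB_of_sup hTT' hS, ← projL_mul_blockB_of_sup hT'T hS', ← add_mul,
        ← projL_eq_add (le_inf_iff.1 hTT').1 hS, projL_mul_blockB]
    rw [hb, toLinearMap_add]
    exact (LinearMap.range_add_le _ _).trans (sup_le
      (hT.trans (range_le_of_mul_eq (blockA_mul_projL_of_sup hT'T hS)))
      (hT'.trans (range_le_of_mul_eq (blockA_mul_projL_of_sup hTT' hS'))))

lemma IsWeaklyComplementable.of_sup (hw : IsWeaklyComplementable B S)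
    (hTT' : T' ≤ Tᗮ ⊓ Tᗮ.comap (B : H →ₗ[ℂ] H)) (hT'T : T ≤ T'ᗮ ⊓ T'ᗮ.comap (B : H →ₗ[ℂ] H))
    (hS : T ⊔ T' = S) : IsWeaklyComplementable B T := by
  obtain ⟨m, hm, hr⟩ := hw
  have hc : Commute (projL T) (blockA B S) :=
    (projL_mul_blockA_of_sup hTT' hS).trans (blockA_mul_projL_of_sup hT'T hS).symm
  exact ⟨projL T * m, projL_mul_blockA_of_sup hTT' hS ▸ hm.projL_mul hc,
    projL_mul_blockB_of_sup hTT' hS ▸ range_mul_le_range_mul _ hr⟩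

lemma IsWDecomp.le_orthogonal_inf_comap {Sp Sm : Submodule ℂ H} (hB : IsSelfAdjoint B)
    (hdec : IsWDecomp B S Sp Sm) :
    Sm ≤ Spᗮ ⊓ Spᗮ.comap (B : H →ₗ[ℂ] H) ∧ Sp ≤ Smᗮ ⊓ Smᗮ.comap (B : H →ₗ[ℂ] H) := by
  obtain ⟨horth, -, -, -, hBo⟩ := hdec
  refine ⟨fun y hy => ⟨?_, ?_⟩, fun x hx => ⟨?_, ?_⟩⟩
  · exact (Submodule.mem_orthogonal _ _).2 fun x hx => horth x hx y hy
  · refine (Submodule.mem_orthogonal _ _).2 fun x hx => ?_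
    rw [coe_coe, ← hB.adjoint_eq, adjoint_inner_right]
    exact hBo x hx y hy
  · exact (Submodule.mem_orthogonal _ _).2 fun y hy => inner_eq_zero_symm.1 (horth x hx y hy)
  · exact (Submodule.mem_orthogonal _ _).2 fun y hy => inner_eq_zero_symm.1 (hBo x hx y hy)

end OrthogonalSum

/-- Characterizations of `S`-complementability through a decomposition `S = S₊ ⊕_B S₋`, and
the existence of a `B`-selfadjoint projection onto `S` splitting as `Q = Q₊ + Q₋`. -/
theorem stmt_9 (B : H →L[ℂ] H) (hB : IsSelfAdjoint B)
    (S Sp Sm : Submodule ℂ H) [CompleteSpace S] [CompleteSpace Sp] [CompleteSpace Sm]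
    (hdec : IsWDecomp B S Sp Sm) :
    (IsComplementable B S ↔ (IsComplementable B Sp ∧ IsComplementable B Sm)) ∧
    (IsComplementable B S ↔
      (IsWeaklyComplementable B S ∧
        (∀ Y, IsSchur B Sp Y → IsComplementable Y Sm) ∧
        (∀ Y, IsSchur B Sm Y → IsComplementable Y Sp))) ∧
    (IsComplementable B S →
      ∃ Q Qp Qm : H →L[ℂ] H, Q ∈ projSet B S ∧ Qp ∈ projSet B Sp ∧ Qm ∈ projSet B Sm ∧
        Q = Qp + Qm ∧
        (∀ x ∈ LinearMap.range (Qp : H →ₗ[ℂ] H), ∀ y ∈ LinearMap.range (Qm : H →ₗ[ℂ] H), (inner ℂ x y : ℂ) = 0) ∧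
        Qp * Qm = 0 ∧ Qm * Qp = 0) := by
  obtain ⟨hpm, hmp⟩ := hdec.le_orthogonal_inf_comap hB
  obtain ⟨horth, hsup, hpos, hneg, -⟩ := hdec
  have hsup' : Sm ⊔ Sp = S := sup_comm Sp Sm ▸ hsup
  have hii := isComplementable_iff_of_sup hpm hmp hsup
  refine ⟨hii, ⟨fun h => ⟨h.isWeaklyComplementable hB,
      fun Y hY => (hY.isComplementable_iff hpm hmp).2 (hii.1 h).2,
      fun Y hY => (hY.isComplementable_iff hmp hpm).2 (hii.1 h).1⟩, ?_⟩, fun h => ?_⟩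
  · rintro ⟨hw, hSchurP, hSchurM⟩
    obtain ⟨Yp, hYp⟩ := (hw.of_sup hpm hmp hsup).exists_isSchur_of_nonneg
      (blockA_nonneg hB hpos)
    obtain ⟨Ym, hYm⟩ := (hw.of_sup hmp hpm hsup').exists_isSchur_of_nonpos
      (blockA_nonpos hB hneg)
    exact hii.2 ⟨(hYm.isComplementable_iff hmp hpm).1 (hSchurM Ym hYm),
      (hYp.isComplementable_iff hpm hmp).1 (hSchurP Yp hYp)⟩
  · obtain ⟨Qp, hQp, hkp⟩ := (hii.1 h).1.exists_mem_projSet hB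
    obtain ⟨Qm, hQm, hkm⟩ := (hii.1 h).2.exists_mem_projSet hB
    have hQpm : Qp * Qm = 0 := ContinuousLinearMap.ext fun x => hkp (hpm (hQm.2.1 ▸ ⟨x, rfl⟩))
    have hQmp : Qm * Qp = 0 := ContinuousLinearMap.ext fun x => hkm (hmp (hQp.2.1 ▸ ⟨x, rfl⟩))
    refine ⟨Qp + Qm, Qp, Qm, hsup ▸ add_mem_projSet hQp hQm hQpm hQmp, hQp, hQm, rfl,
      fun x hx y hy => ?_, hQpm, hQmp⟩
    rw [hQp.2.1] at hx
    rw [hQm.2.1] at hy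
    exact horth x hx y hy
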